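/- Let A be the complex 4 × 2 matrix A = (1/(2·3^{1/4})) · [[√(√3+1), (1−i)/√(√3+1)], [√(√3+1), (−1+i)/√(√3+1)], [√(√3−1), (1+i)/√(√3−1)], [√(√3−1), (−1−i)/√(√3−1)]]. Then A has orthonormal columns: AᴴA = I₂. -/

import Mathlib

open Matrix Complex

/-- The complex `4 × 2` matrix
`A = (1/(2·3^{1/4})) · [[√(√3+1), (1−i)/√(√3+1)], [√(√3+1), (−1+i)/√(√3+1)],
[√(√3−1), (1+i)/√(√3−1)], [√(√3−1), (−1−i)/√(√3−1)]]`. -/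
noncomputable def tetraMatrix : Matrix (Fin 4) (Fin 2) ℂ :=
  ((1 / (2 * Real.sqrt (Real.sqrt 3)) : ℝ) : ℂ) •
    !![(Real.sqrt (Real.sqrt 3 + 1) : ℂ),
         (1 - Complex.I) / (Real.sqrt (Real.sqrt 3 + 1) : ℂ);
       (Real.sqrt (Real.sqrt 3 + 1) : ℂ),
         (-1 + Complex.I) / (Real.sqrt (Real.sqrt 3 + 1) : ℂ);
       (Real.sqrt (Real.sqrt 3 - 1) : ℂ),
         (1 + Complex.I) / (Real.sqrt (Real.sqrt 3 - 1) : ℂ);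
       (Real.sqrt (Real.sqrt 3 - 1) : ℂ),
         (-1 - Complex.I) / (Real.sqrt (Real.sqrt 3 - 1) : ℂ)]

/-!
Write the matrix as `c • M` with `c = 1/(2·3^{1/4})` real and rows `(a, z/a), (a, -z/a), (b, w/b),
(b, -w/b)`, where `a = √(√3+1)`, `b = √(√3-1)`, `z = 1 - i`, `w = 1 + i`. The sign pattern makes the
columns of `M` orthogonal, with squared lengths `2(a² + b²) = 4√3` and
`2(|z|²/a² + |w|²/b²) = 4(a² + b²)/(a²b²) = 4√3`, using `a²b² = (√3)² - 1 = 2`; and `c² = 1/(4√3)`.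
-/

theorem IsSelfAdjoint.conjTranspose_smul_mul_smul {m n R : Type*} [Fintype m] [CommSemiring R]
    [StarRing R] {r : R} (hr : IsSelfAdjoint r) (M : Matrix m n R) :
    (r • M)ᴴ * (r • M) = (r * r) • (Mᴴ * M) := by
  rw [conjTranspose_smul, hr.star_eq, smul_mul, Matrix.mul_smul, smul_smul]

theorem conjTranspose_mul_self_pairedRows (a b : ℝ) (z w : ℂ) :
    !![(a : ℂ), z / a; a, -z / a; b, w / b; b, -w / b]ᴴ *
        !![(a : ℂ), z / a; a, -z / a; b, w / b; b, -w / b] =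
      !![((2 * (a ^ 2 + b ^ 2) : ℝ) : ℂ), 0;
        0, ((2 * (‖z‖ ^ 2 / a ^ 2 + ‖w‖ ^ 2 / b ^ 2) : ℝ) : ℂ)] := by
  ext i j
  fin_cases i <;> fin_cases j <;>
    simp only [Fin.zero_eta, Fin.mk_one, Fin.isValue, mul_apply, conjTranspose_apply, of_apply,
      cons_val', cons_val_zero, cons_val_one, cons_val_fin_one, cons_val, RCLike.star_def,
      Fin.sum_univ_four, map_div₀, map_neg, conj_ofReal, ofReal_mul, ofReal_ofNat, ofReal_add,
      ofReal_pow, ofReal_div]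
  · ring
  · ring
  · ring
  · linear_combination (2 / (a : ℂ) ^ 2) * conj_mul' z + (2 / (b : ℂ) ^ 2) * conj_mul' w

theorem sq_norm_one_sub_I : ‖1 - I‖ ^ 2 = 2 := by
  norm_num [Complex.sq_norm, normSq_apply]

theorem sq_norm_one_add_I : ‖1 + I‖ ^ 2 = 2 := by
  norm_num [Complex.sq_norm, normSq_apply]

/-- The matrix `tetraMatrix` has orthonormal columns: `Aᴴ * A = 1`. -/
theorem tetraMatrix_orthonormal_columns : tetraMatrixᴴ * tetraMatrix = 1 := by
  have hs : 1 < √3 := by rw [Real.lt_sqrt] <;> norm_num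
  have hsq3 : √3 ^ 2 = 3 := Real.sq_sqrt (by norm_num)
  have ha : √(√3 + 1) ^ 2 = √3 + 1 := Real.sq_sqrt (by linarith)
  have hb : √(√3 - 1) ^ 2 = √3 - 1 := Real.sq_sqrt (by linarith)
  have hscale : 1 / (2 * √√3) * (1 / (2 * √√3)) = 1 / (4 * √3) := by
    field_simp
    rw [Real.sq_sqrt (Real.sqrt_nonneg 3)]
    ring
  have hfirst : 2 * (√(√3 + 1) ^ 2 + √(√3 - 1) ^ 2) = 4 * √3 := by
    rw [ha, hb]; ring
  have hsecond : 2 * (2 / √(√3 + 1) ^ 2 + 2 / √(√3 - 1) ^ 2) = 4 * √3 := by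
    have : √3 - 1 ≠ 0 := by linarith
    rw [ha, hb]; field_simp; linear_combination -4 * √3 * hsq3
  rw [tetraMatrix, show (-1 + I : ℂ) = -(1 - I) by ring, show (-1 - I : ℂ) = -(1 + I) by ring,
    IsSelfAdjoint.conjTranspose_smul_mul_smul (conj_ofReal _), conjTranspose_mul_self_pairedRows,
    sq_norm_one_sub_I, sq_norm_one_add_I, hfirst, hsecond, ← ofReal_mul, hscale]
  have : (√3 : ℂ) ≠ 0 := by exact_mod_cast (by positivity : √3 ≠ 0)
  ext i j
  fin_cases i <;> fin_cases j <;> simp <;> field_simp
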